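/- arXiv:0712.3584 — 7 statements merged into one kernel-verified Lean document; each statement's English description precedes it below -/
import Mathlib

section
/- Let τ be an indeterminate, and let L, p, k be integers with p ≥ 1, k ≥ 1 and k' := L − 2p − k ≥ 1. Define the (p+1)×(p+1) matrix U by: U_{ℓ,1} = (−1)^{ℓ−1}·τ^{2(p+1−ℓ)} for 1 ≤ ℓ ≤ p+1, and U_{ℓ,m+1} = Σ_{r≥0} C(ℓ+k−1, 2m−ℓ−r)·C(m+k'−1, r)·τ^{2r} for 1 ≤ ℓ ≤ p+1 and 1 ≤ m ≤ p. Then det U = T(L,p,k) in ℤ[τ]. -/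
open Polynomial Finset

/-- Binomial coefficient `C(a,b)` for integer arguments, equal to `0` if `b < 0` or `b > a`
    (for `a ≥ 0`). -/
def intChoose (a b : ℤ) : ℤ := if 0 ≤ b then (a.toNat.choose b.toNat : ℤ) else 0

/-- `T(L,p,k)`: the determinant of the `p × p` matrix whose `(ℓ,m)` entry (`1 ≤ ℓ, m ≤ p`) is
    `∑_{r=0}^{2p} C(ℓ+k-1, r-ℓ) C(m+L-2p-k, 2m-r) τ^{2(2m-r)}`, as a polynomial in `τ`. -/
noncomputable def Tpoly (L p k : ℤ) : Polynomial ℤ :=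
  Matrix.det (Matrix.of fun ℓ m : Fin p.toNat =>
    ∑ r ∈ Finset.range (2 * p.toNat + 1),
      Polynomial.C (intChoose ((ℓ : ℤ) + 1 + k - 1) ((r : ℤ) - ((ℓ : ℤ) + 1)) *
          intChoose (((m : ℤ) + 1) + L - 2 * p - k) (2 * ((m : ℤ) + 1) - (r : ℤ))) *
        Polynomial.X ^ (2 * (2 * ((m : ℤ) + 1) - (r : ℤ))).toNat)

/-- The `(p+1) × (p+1)` matrix `U`: its first column is `U_{ℓ,1} = (-1)^{ℓ-1} τ^{2(p+1-ℓ)}`,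
    and for `1 ≤ m ≤ p`,
    `U_{ℓ,m+1} = ∑_{r ≥ 0} C(ℓ+k-1, 2m-ℓ-r) C(m+k'-1, r) τ^{2r}` with `k' = L-2p-k`. -/
noncomputable def Umatrix (L p k : ℤ) :
    Matrix (Fin (p.toNat + 1)) (Fin (p.toNat + 1)) (Polynomial ℤ) :=
  Matrix.of fun ℓ m =>
    if (m : ℕ) = 0 then
      (-1) ^ (ℓ : ℕ) * Polynomial.X ^ (2 * (p.toNat - (ℓ : ℕ)))
    else
      ∑ r ∈ Finset.range (2 * p.toNat + 1),
        Polynomial.C (intChoose ((ℓ : ℤ) + 1 + k - 1)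
              (2 * (m : ℤ) - ((ℓ : ℤ) + 1) - (r : ℤ)) *
            intChoose ((m : ℤ) + (L - 2 * p - k) - 1) (r : ℤ)) *
          Polynomial.X ^ (2 * r)

/-!
Left multiplication by the unitriangular matrix `B` with `X²` on the superdiagonal replaces each
row `ℓ` of `U` by `row ℓ + X² • row (ℓ + 1)`. This clears the first column except for its last
entry `(-1)^p`, and, by Pascal's rule in both binomial factors, turns the remaining `p × p` block
into `T * B`, where `T` is the matrix of `T(L,p,k)` with its summation index reflected. Both
unitriangular factors have determinant `1`.
-/

lemma intChoose_of_neg (a : ℤ) {b : ℤ} (hb : b < 0) : intChoose a b = 0 := if_neg (by omega)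

lemma intChoose_add_one {a : ℤ} (ha : 0 ≤ a) (b : ℤ) :
    intChoose (a + 1) b = intChoose a b + intChoose a (b - 1) := by
  rcases lt_trichotomy b 0 with hb | rfl | hb
  · simp [intChoose_of_neg _ hb, intChoose_of_neg _ (show b - 1 < 0 by omega)]
  · simp [intChoose]
  · simp only [intChoose, if_pos hb.le, if_pos (show 0 ≤ b - 1 by omega)]
    rw [show (a + 1).toNat = a.toNat + 1 by omega, show b.toNat = (b - 1).toNat + 1 by omega,
      Nat.choose_succ_succ]
    push_cast
    ring

/-- For `a, b ≥ 0` and `c < N`, the coefficient of `t ^ c` in `(1 + t) ^ a * (1 + X²t) ^ b`. -/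
noncomputable def binomConv (N : ℕ) (a b c : ℤ) : ℤ[X] :=
  ∑ r ∈ range N, C (intChoose a (c - r) * intChoose b r) * X ^ (2 * r)

lemma binomConv_of_neg (N : ℕ) (a b : ℤ) {c : ℤ} (hc : c < 0) : binomConv N a b c = 0 :=
  sum_eq_zero fun r _ => by rw [intChoose_of_neg a (by omega), zero_mul, map_zero, zero_mul]

lemma binomConv_succ {N : ℕ} (a b : ℤ) {c : ℤ} (hc : c < N) :
    binomConv (N + 1) a b c = binomConv N a b c := by
  rw [binomConv, sum_range_succ, intChoose_of_neg a (by omega), zero_mul, map_zero, zero_mul,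
    add_zero, binomConv]

lemma X_sq_mul_binomConv (N : ℕ) (a b c : ℤ) :
    X ^ 2 * binomConv N a b (c - 1) =
      ∑ r ∈ range (N + 1), C (intChoose a (c - r) * intChoose b (r - 1)) * X ^ (2 * r) := by
  rw [sum_range_succ', binomConv, mul_sum]
  simp only [Nat.cast_zero, zero_sub, intChoose_of_neg b (show (-1 : ℤ) < 0 by norm_num),
    mul_zero, map_zero, zero_mul, add_zero, Nat.cast_add, Nat.cast_one, add_sub_cancel_right]
  refine sum_congr rfl fun r _ => ?_
  rw [show c - (r + 1 : ℤ) = c - 1 - r by ring, mul_left_comm, ← pow_add, mul_add_one, add_comm]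

/-- The coefficient of `t ^ c` in the identity `1 + X²t(1 + t) = (1 + X²t) + X²t²`,
multiplied by `(1 + t) ^ a * (1 + X²t) ^ b`. -/
lemma binomConv_pascal {N : ℕ} {a b c : ℤ} (ha : 0 ≤ a) (hb : 0 ≤ b) (hc : c < N) :
    binomConv N a b c + X ^ 2 * binomConv N (a + 1) b (c - 1) =
      binomConv N a (b + 1) c + X ^ 2 * binomConv N a b (c - 2) := by
  rw [← binomConv_succ a b hc, ← binomConv_succ a (b + 1) hc, X_sq_mul_binomConv,
    show c - 2 = c - 1 - 1 by ring, X_sq_mul_binomConv, binomConv, binomConv,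
    ← sum_add_distrib, ← sum_add_distrib]
  refine sum_congr rfl fun r _ => ?_
  rw [← add_mul, ← add_mul, ← map_add, ← map_add, intChoose_add_one ha, intChoose_add_one hb,
    show c - 1 - r = c - r - 1 by ring]
  congr 2
  ring

lemma sum_reflect_eq_binomConv (a b : ℤ) {c d : ℤ} {N : ℕ} (hc : 0 ≤ c) (hcN : c < N)
    (hd : 0 ≤ d) :
    ∑ r ∈ range N, C (intChoose a (r - d) * intChoose b (c - r)) * X ^ (2 * (c - r)).toNat =
      binomConv N a b (c - d) := by
  lift c to ℕ using hc
  have hsub : range (c + 1) ⊆ range N := range_subset_range.mpr (by omega)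
  rw [binomConv, ← sum_subset hsub, ← sum_subset hsub, ← sum_range_reflect]
  · refine sum_congr rfl fun r hr => ?_
    rw [mem_range] at hr
    rw [show ((c + 1 - 1 - r : ℕ) : ℤ) = c - r by omega, show (c : ℤ) - (c - r) = r by ring,
      show (2 * (r : ℤ)).toNat = 2 * r by omega, show (c : ℤ) - r - d = c - d - r by ring]
  all_goals
    intro r hrN hr
    rw [mem_range] at hrN hr
  · rw [intChoose_of_neg a (by omega), zero_mul, map_zero, zero_mul]
  · rw [intChoose_of_neg b (by omega), mul_zero, map_zero, zero_mul]

section Elimination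

variable {R : Type*} [CommRing R]

def bidiag (n : ℕ) (c : R) : Matrix (Fin n) (Fin n) R :=
  Matrix.of fun i j => if i = j then 1 else if (i : ℕ) + 1 = j then c else 0

@[simp]
lemma det_bidiag (n : ℕ) (c : R) : (bidiag n c).det = 1 := by
  rw [Matrix.det_of_isUpperTriangular]
  · simp [bidiag]
  · intro i j (hij : j < i)
    rw [Fin.lt_def] at hij
    simp only [bidiag, Matrix.of_apply]
    rw [if_neg (by rintro rfl; omega), if_neg (by omega)]

lemma bidiag_mul_apply_of_succ {n : ℕ} (c : R) (M : Matrix (Fin n) (Fin n) R) {i i' : Fin n}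
    (hi : (i' : ℕ) = i + 1) (j : Fin n) :
    (bidiag n c * M) i j = M i j + c * M i' j := by
  have hne : i ≠ i' := fun h => by rw [h] at hi; omega
  rw [Matrix.mul_apply, Fintype.sum_eq_add i i' hne]
  · simp [bidiag, hne, hi]
  · rintro l ⟨hl, hl'⟩
    have : (i : ℕ) + 1 ≠ l := fun h => hl' (Fin.ext (by omega))
    simp [bidiag, Ne.symm hl, this]

lemma bidiag_mul_apply_of_last {n : ℕ} (c : R) (M : Matrix (Fin n) (Fin n) R) {i : Fin n}
    (hi : (i : ℕ) + 1 = n) (j : Fin n) :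
    (bidiag n c * M) i j = M i j := by
  rw [Matrix.mul_apply, Fintype.sum_eq_single i]
  · simp [bidiag]
  · intro l hl
    have : (i : ℕ) + 1 ≠ l := by omega
    simp [bidiag, Ne.symm hl, this]

lemma mul_bidiag_apply_of_succ {n : ℕ} (c : R) (M : Matrix (Fin n) (Fin n) R) (i : Fin n)
    {j j' : Fin n} (hj : (j : ℕ) = j' + 1) :
    (M * bidiag n c) i j = M i j + c * M i j' := by
  have hne : j ≠ j' := fun h => by rw [h] at hj; omega
  rw [Matrix.mul_apply, Fintype.sum_eq_add j j' hne]
  · simp [bidiag, Ne.symm hne, hj, mul_comm]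
  · rintro l ⟨hl, hl'⟩
    have : (l : ℕ) + 1 ≠ j := fun h => hl' (Fin.ext (by omega))
    simp [bidiag, hl, this]

lemma mul_bidiag_apply_of_zero {n : ℕ} (c : R) (M : Matrix (Fin n) (Fin n) R) (i : Fin n)
    {j : Fin n} (hj : (j : ℕ) = 0) :
    (M * bidiag n c) i j = M i j := by
  rw [Matrix.mul_apply, Fintype.sum_eq_single j]
  · simp [bidiag]
  · intro l hl
    have : (l : ℕ) + 1 ≠ j := by omega
    simp [bidiag, hl, this]

lemma det_eq_last_mul_det_submatrix {n : ℕ} (A : Matrix (Fin (n + 1)) (Fin (n + 1)) R)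
    (h : ∀ i : Fin n, A i.castSucc 0 = 0) :
    A.det = (-1) ^ n * A (Fin.last n) 0 * (A.submatrix Fin.castSucc Fin.succ).det := by
  simp [Matrix.det_succ_column_zero A, Fin.sum_univ_castSucc, h]

end Elimination

lemma Umatrix_apply_zero (L p k : ℤ) (i : Fin (p.toNat + 1)) :
    Umatrix L p k i 0 = (-1) ^ (i : ℕ) * X ^ (2 * (p.toNat - i)) := by
  simp [Umatrix]

lemma Umatrix_apply_succ (L p k : ℤ) (i : Fin (p.toNat + 1)) (j : Fin p.toNat) :
    Umatrix L p k i j.succ =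
      binomConv (2 * p.toNat + 1) (i + k) (j + (L - 2 * p - k)) (2 * j + 1 - i) := by
  simp only [Umatrix, Matrix.of_apply, Fin.val_succ, Nat.add_one_ne_zero, if_false]
  push_cast
  rw [binomConv]
  congr! 5 <;> ring

/-- The matrix of `Tpoly`, with its summation index reflected (`r ↦ 2m - r`). -/
noncomputable def Tmatrix (L p k : ℤ) : Matrix (Fin p.toNat) (Fin p.toNat) ℤ[X] :=
  Matrix.of fun i j =>
    binomConv (2 * p.toNat + 1) (i + k) (j + (L - 2 * p - k) + 1) (2 * j + 1 - i)

lemma Tpoly_eq_det_Tmatrix (L p k : ℤ) : Tpoly L p k = (Tmatrix L p k).det := by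
  rw [Tpoly]
  congr 1
  refine Matrix.ext fun i j => ?_
  rw [Matrix.of_apply, show (i : ℤ) + 1 + k - 1 = i + k by ring,
    show (j : ℤ) + 1 + L - 2 * p - k = j + (L - 2 * p - k) + 1 by ring,
    sum_reflect_eq_binomConv _ _ (by omega) (by omega) (by omega), Tmatrix, Matrix.of_apply]
  congr 1
  ring

lemma bidiag_mul_Umatrix_apply_castSucc_zero (L p k : ℤ) (i : Fin p.toNat) :
    (bidiag (p.toNat + 1) (X ^ 2 : ℤ[X]) * Umatrix L p k) i.castSucc 0 = 0 := by
  rw [bidiag_mul_apply_of_succ _ _ (i' := i.succ) (by simp), Umatrix_apply_zero,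
    Umatrix_apply_zero, Fin.val_castSucc, Fin.val_succ,
    show 2 * (p.toNat - i) = 2 + 2 * (p.toNat - (i + 1)) by omega]
  ring

lemma bidiag_mul_Umatrix_apply_last_zero (L p k : ℤ) :
    (bidiag (p.toNat + 1) (X ^ 2 : ℤ[X]) * Umatrix L p k) (Fin.last _) 0 = (-1) ^ p.toNat := by
  rw [bidiag_mul_apply_of_last _ _ (i := Fin.last _) (by simp), Umatrix_apply_zero]
  simp

lemma submatrix_bidiag_mul_Umatrix {L p k : ℤ} (hk : 0 ≤ k) (hk' : 0 ≤ L - 2 * p - k) :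
    (bidiag (p.toNat + 1) (X ^ 2 : ℤ[X]) * Umatrix L p k).submatrix Fin.castSucc Fin.succ =
      Tmatrix L p k * bidiag p.toNat (X ^ 2) := by
  refine Matrix.ext fun i j => ?_
  have hpascal := binomConv_pascal (N := 2 * p.toNat + 1) (a := i + k) (b := j + (L - 2 * p - k))
    (c := 2 * j + 1 - i) (by omega) (by omega) (by have := j.isLt; omega)
  rw [Matrix.submatrix_apply, bidiag_mul_apply_of_succ _ _ (i' := i.succ) (by simp),
    Umatrix_apply_succ, Umatrix_apply_succ, Fin.val_castSucc, Fin.val_succ, Nat.cast_succ,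
    add_right_comm, show 2 * (j : ℤ) + 1 - (i + 1) = 2 * j + 1 - i - 1 by ring, hpascal]
  rcases (j : ℕ).eq_zero_or_pos with hj | hj
  · rw [mul_bidiag_apply_of_zero _ _ _ hj,
      binomConv_of_neg _ _ _ (c := 2 * j + 1 - i - 2) (by omega), mul_zero, add_zero,
      Tmatrix, Matrix.of_apply]
  · rw [mul_bidiag_apply_of_succ _ _ _ (j' := ⟨j - 1, by omega⟩) (by simp; omega), Tmatrix,
      Matrix.of_apply, Matrix.of_apply, show ((j : ℕ) : ℤ) = (j - 1 : ℕ) + 1 by omega]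
    congr 3 <;> ring

theorem det_Umatrix_eq_Tpoly_general (L p k : ℤ) (hk : 1 ≤ k)
    (hk' : 1 ≤ L - 2 * p - k) :
    (Umatrix L p k).det = Tpoly L p k := by
  calc (Umatrix L p k).det = (bidiag (p.toNat + 1) (X ^ 2 : ℤ[X]) * Umatrix L p k).det := by
        rw [Matrix.det_mul, det_bidiag, one_mul]
    _ = (-1) ^ p.toNat * (-1) ^ p.toNat * (Tmatrix L p k * bidiag p.toNat (X ^ 2)).det := by
        rw [det_eq_last_mul_det_submatrix _ (bidiag_mul_Umatrix_apply_castSucc_zero L p k),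
          bidiag_mul_Umatrix_apply_last_zero, submatrix_bidiag_mul_Umatrix (by omega) (by omega)]
    _ = Tpoly L p k := by
        rw [Matrix.det_mul, det_bidiag, mul_one, ← mul_pow, neg_one_mul, neg_neg, one_pow, one_mul,
          Tpoly_eq_det_Tmatrix]

/-- Lemma 3 of the paper: `det U = T(L,p,k)`. -/
theorem det_Umatrix_eq_Tpoly (L p k : ℤ) (hp : 1 ≤ p) (hk : 1 ≤ k)
    (hk' : 1 ≤ L - 2 * p - k) :
    (Umatrix L p k).det = Tpoly L p k :=
  det_Umatrix_eq_Tpoly_general L p k hk hk'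
end

section
/- Let R be a commutative ring, n ≥ 1, and let A and B be n×n matrices over R. For 1 ≤ j ≤ n, let A⟨j⟩ denote the matrix obtained from A by replacing its n-th row with the j-th row of B, and let B⟨j⟩ denote the matrix obtained from B by replacing its j-th row with the n-th row of A. Then det A · det B = Σ_{j=1}^{n} det A⟨j⟩ · det B⟨j⟩. -/
/-!
Expanding `det A` along row `i` makes `v ↦ det (A.updateRow i v)` linear, and Cramer's rule for
`Bᵀ` writes `det B • A i` as `∑ j, det (B.updateRow j (A i)) • B j`. Substituting this expansion
into row `i` of `A` gives the identity, for any row `i`.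
-/

open Matrix

namespace Matrix

variable {n R : Type*} [Fintype n] [DecidableEq n] [CommRing R]

theorem det_updateRow_sum_smul {ι : Type*} (A : Matrix n n R) (i : n) (s : Finset ι)
    (c : ι → R) (v : ι → n → R) :
    (A.updateRow i (∑ k ∈ s, c k • v k)).det = ∑ k ∈ s, c k * (A.updateRow i (v k)).det := by
  have := map_sum ((detRowAlternating : (n → R) [⋀^n]→ₗ[R] R).toMultilinearMap.toLinearMap A i)
    (fun k => c k • v k) s
  simp only [map_smul, smul_eq_mul] at this
  exact this

theorem det_smul_eq_sum_det_updateRow_smul (B : Matrix n n R) (v : n → R) :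
    B.det • v = ∑ j, (B.updateRow j v).det • B j := by
  rw [← det_transpose, ← mulVec_cramer, mulVec_transpose, vecMul_eq_sum]
  simp only [cramer_transpose_apply]

theorem det_mul_det_eq_sum_det_updateRow_mul_det_updateRow (A B : Matrix n n R) (i : n) :
    A.det * B.det = ∑ j, (A.updateRow i (B j)).det * (B.updateRow j (A i)).det := by
  calc A.det * B.det = (A.updateRow i (B.det • A i)).det := by
        rw [det_updateRow_smul, updateRow_eq_self, mul_comm]
    _ = ∑ j, (B.updateRow j (A i)).det * (A.updateRow i (B j)).det := by
        rw [det_smul_eq_sum_det_updateRow_smul]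
        exact det_updateRow_sum_smul A i _ _ _
    _ = ∑ j, (A.updateRow i (B j)).det * (B.updateRow j (A i)).det := by
        simp only [mul_comm]

end Matrix

/-- A special case of the Plücker relations: exchanging the last row of `A` with each row of `B`
    in turn.  For `n×n` matrices `A`, `B` (here of size `n+1 ≥ 1`) over a commutative ring `R`:
    `det A · det B = ∑_{j} det A⟨j⟩ · det B⟨j⟩`, where `A⟨j⟩` is `A` with its last row replaced
    by the `j`-th row of `B`, and `B⟨j⟩` is `B` with its `j`-th row replaced by the last row
    of `A`. -/
theorem det_mul_det_eq_sum_rowExchange_plucker (R : Type*) [CommRing R] (n : ℕ)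
    (A B : Matrix (Fin (n + 1)) (Fin (n + 1)) R) :
    A.det * B.det =
      ∑ j : Fin (n + 1),
        (A.updateRow (Fin.last n) (B j)).det * (B.updateRow j (A (Fin.last n))).det :=
  det_mul_det_eq_sum_det_updateRow_mul_det_updateRow A B (Fin.last n)
end

section
/- Let L = 2n be even, let 0 ≤ p ≤ n−1, set p̃ = n−1−p, and fix ε = (ε_1,…,ε_p) ∈ {0,1}^p. Define the non-decreasing sequence a = (a_1,…,a_n) by a_ℓ = 2ℓ + p̃ − 1 + ε_{p+1−ℓ} for 1 ≤ ℓ ≤ p and a_ℓ = ℓ + n − 1 for p+1 ≤ ℓ ≤ n. Then for every Dyck path α of length L: C_{a;α} = 1 if α ∈ 𝒟_{L,p} and, for every i with 1 ≤ i ≤ p, one has α_{L−p̃−2i−1} < α_{L−p̃−2i} if and only if ε_i = 1; and C_{a;α} = 0 in all other cases. -/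
open Finset

/-- `s_κ ∈ ℤ[τ]`: `s_0 = 0`, `s_1 = 1`, `s_{κ+1} = -τ s_κ - s_{κ-1}`. -/
noncomputable def qnum : ℕ → Polynomial ℤ
  | 0 => 0
  | 1 => 1
  | (n + 2) => -Polynomial.X * qnum (n + 1) - qnum n

/-- The position of the leftmost local maximum (peak) of a path encoded as a list of steps
    (`true` = up-step, `false` = down-step): the index `i ≥ 1` such that step `i` is an
    up-step immediately followed by a down-step. -/
def firstPeak : List Bool → Option ℕ
  | true :: false :: _ => some 1
  | _ :: rest => (firstPeak rest).map (· + 1)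
  | [] => none

/-- Remove the leftmost peak (the first adjacent up-step/down-step pair) from a list of steps. -/
def removePeak : List Bool → List Bool
  | true :: false :: rest => rest
  | x :: rest => x :: removePeak rest
  | [] => []

/-- The recursively defined coefficient `C_{a;α}` (with fuel; the fuel `steps.length` used in
    `coeffC` below is always sufficient since each recursive call shortens the path by two
    steps): `C_{∅;∅} = 1`; otherwise, with `i` the leftmost local maximum of the path and `κ`
    the number of entries of `a` equal to `i`, `C_{a;α} = s_κ · C_{a';α'}`, where `α'` is the
    path with the peak at `i` removed and `a'` is obtained from `a` by deleting one occurrence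
    of `i` and replacing each remaining entry `x` by `x` if `x < i`, by `i-1` if `x = i`, and
    by `x-2` if `x > i` (note `s_0 = 0`, so `C_{a;α} = 0` when `κ = 0`). -/
noncomputable def coeffCAux : ℕ → Multiset ℤ → List Bool → Polynomial ℤ
  | 0, _, _ => 1
  | (fuel + 1), a, steps =>
    match firstPeak steps with
    | none => 1
    | some i =>
        qnum (a.count (i : ℤ)) *
          coeffCAux fuel
            ((a.erase (i : ℤ)).map fun x =>
              if x < (i : ℤ) then x else if x = (i : ℤ) then (i : ℤ) - 1 else x - 2)
            (removePeak steps)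

/-- The coefficient `C_{a;α}` of the linear expansion of `ψ_{a_1,…,a_n}` in the components
    `ψ_α`. -/
noncomputable def coeffC (a : Multiset ℤ) (steps : List Bool) : Polynomial ℤ :=
  coeffCAux steps.length a steps

/-!
The entries of `a` are distinct, so peeling off the first peak `i` of `α` gives
`C_{a;α} = C_{a';α'}` when `i` is an entry of `a` and `C_{a;α} = 0` otherwise; we induct on `n`.
The path rises straight to height `i`, so the barrier `α ≥ min(Ω, p̃)` forces `i > p̃`, and the
parity of `i - p̃ - 1` together with the step conditions singles out the entry `a_ℓ = i`, `ℓ ≤ p`.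
Removing it leaves a sequence of the same shape for `p - 1`, with `ε_{p+1-ℓ}` deleted, and both
conditions on `α` transfer to `α'`. For `p = 0` the peak has height `n = a_1`, and its removal
lowers `p̃` by one.
-/

def relabel (i x : ℤ) : ℤ := if x < i then x else if x = i then i - 1 else x - 2

lemma firstPeak_replicate_append {i : ℕ} (hi : 0 < i) (t : List Bool) :
    firstPeak (List.replicate i true ++ false :: t) = some i := by
  induction i, hi using Nat.le_induction with
  | base => rfl
  | succ k hk ih =>
    obtain ⟨k, rfl⟩ : ∃ m, k = m + 1 := ⟨k - 1, by omega⟩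
    simp only [List.replicate_succ, List.cons_append] at ih ⊢
    exact congrArg (Option.map (· + 1)) ih

lemma removePeak_replicate_append {i : ℕ} (hi : 0 < i) (t : List Bool) :
    removePeak (List.replicate i true ++ false :: t) = List.replicate (i - 1) true ++ t := by
  induction i, hi using Nat.le_induction with
  | base => rfl
  | succ k hk ih =>
    obtain ⟨k, rfl⟩ : ∃ m, k = m + 1 := ⟨k - 1, by omega⟩
    simp only [List.replicate_succ, List.cons_append, Nat.add_sub_cancel] at ih ⊢
    exact congrArg (true :: ·) ih

lemma length_removePeak {s : List Bool} {i : ℕ} (h : firstPeak s = some i) :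
    (removePeak s).length + 2 = s.length := by
  induction s generalizing i with
  | nil => simp [firstPeak] at h
  | cons x rest ih =>
    match x, rest, h with
    | true, false :: r, _ => rfl
    | true, true :: r, h =>
      obtain ⟨j, hj, -⟩ := Option.map_eq_some_iff.mp h
      have : removePeak (true :: true :: r) = true :: removePeak (true :: r) := rfl
      simpa [this] using ih hj
    | false, r, h =>
      obtain ⟨j, hj, -⟩ := Option.map_eq_some_iff.mp h
      have : removePeak (false :: r) = false :: removePeak r := rfl
      simpa [this] using ih hj

lemma coeffCAux_congr_fuel {f f' : ℕ} {a : Multiset ℤ} {s : List Bool}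
    (hf : s.length ≤ f) (hf' : s.length ≤ f') : coeffCAux f a s = coeffCAux f' a s := by
  induction f generalizing f' a s with
  | zero =>
    obtain rfl : s = [] := List.eq_nil_of_length_eq_zero (by omega)
    cases f' <;> rfl
  | succ f ih =>
    cases f' with
    | zero =>
      obtain rfl : s = [] := List.eq_nil_of_length_eq_zero (by omega)
      rfl
    | succ f' =>
      simp only [coeffCAux]
      cases h : firstPeak s with
      | none => rfl
      | some i =>
        have := length_removePeak h
        simp only
        rw [ih (f' := f') (by omega) (by omega)]

lemma coeffC_of_firstPeak {a : Multiset ℤ} {s : List Bool} {i : ℕ} (h : firstPeak s = some i) :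
    coeffC a s = qnum (a.count (i : ℤ)) *
      coeffC ((a.erase (i : ℤ)).map (relabel i)) (removePeak s) := by
  have hlen := length_removePeak h
  rw [coeffC, ← hlen, coeffCAux, h]
  exact congrArg (qnum _ * ·) (coeffCAux_congr_fuel (Nat.le_succ _) le_rfl)

def upSteps (L : ℕ) (α : ℕ → ℤ) : List Bool :=
  (List.range L).map fun k => decide (α k < α (k + 1))

lemma upSteps_add (a b : ℕ) (α : ℕ → ℤ) :
    upSteps (a + b) α = upSteps a α ++ upSteps b (fun k => α (a + k)) := by
  simp [upSteps, List.range_add, Function.comp_def, Nat.add_assoc]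

lemma upSteps_congr {m : ℕ} {α β : ℕ → ℤ} (h : ∀ k ≤ m, α k = β k) :
    upSteps m α = upSteps m β :=
  List.map_congr_left fun k hk => by
    rw [h k (List.mem_range.mp hk).le, h (k + 1) (List.mem_range.mp hk)]

lemma upSteps_eq_replicate {m : ℕ} {α : ℕ → ℤ} (h : ∀ k < m, α k < α (k + 1)) :
    upSteps m α = List.replicate m true :=
  List.eq_replicate_iff.mpr ⟨by simp [upSteps], by simpa [upSteps] using h⟩

structure IsDyckPath (L : ℕ) (α : ℕ → ℤ) : Prop where
  step : ∀ k < L, α (k + 1) = α k + 1 ∨ α (k + 1) = α k - 1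
  nonneg : ∀ k ≤ L, 0 ≤ α k
  zero : α 0 = 0
  last : α L = 0

structure IsFirstPeak (α : ℕ → ℤ) (i : ℕ) : Prop where
  pos : 0 < i
  eq_of_le : ∀ k ≤ i, α k = k
  succ : α (i + 1) = i - 1

def dropPeak (α : ℕ → ℤ) (i k : ℕ) : ℤ := if k < i then α k else α (k + 2)

lemma dropPeak_of_lt {α : ℕ → ℤ} {i k : ℕ} (hk : k < i) : dropPeak α i k = α k := if_pos hk

namespace IsFirstPeak

variable {α : ℕ → ℤ} {i : ℕ}

lemma lt_succ_of_lt (hi : IsFirstPeak α i) {k : ℕ} (hk : k < i) : α k < α (k + 1) := by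
  rw [hi.eq_of_le k hk.le, hi.eq_of_le (k + 1) hk]
  omega

lemma succ_lt (hi : IsFirstPeak α i) : α (i + 1) < α i := by
  rw [hi.succ, hi.eq_of_le i le_rfl]
  omega

lemma pred_eq_succ (hi : IsFirstPeak α i) : α (i - 1) = α (i + 1) := by
  have := hi.pos
  rw [hi.eq_of_le _ (Nat.sub_le i 1), hi.succ]
  omega

lemma dropPeak_of_pred_le (hi : IsFirstPeak α i) {k : ℕ} (hk : i - 1 ≤ k) :
    dropPeak α i k = α (k + 2) := by
  unfold dropPeak
  split_ifs with hki
  · rw [show k = i - 1 by omega, hi.pred_eq_succ, show i - 1 + 2 = i + 1 by omega]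
  · rfl

lemma upSteps_eq (hi : IsFirstPeak α i) {L : ℕ} (hiL : i ≤ L + 1) :
    upSteps (L + 2) α =
      List.replicate i true ++ false :: upSteps (L + 1 - i) (fun k => α (i + 1 + k)) := by
  rw [show L + 2 = i + (1 + (L + 1 - i)) by omega, upSteps_add, upSteps_add,
    upSteps_eq_replicate (α := α) fun k hk => hi.lt_succ_of_lt hk]
  simp [upSteps, hi.succ_lt.not_gt, Nat.add_assoc]

lemma upSteps_dropPeak (hi : IsFirstPeak α i) {L : ℕ} (hiL : i ≤ L + 1) :
    upSteps L (dropPeak α i) =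
      List.replicate (i - 1) true ++ upSteps (L + 1 - i) (fun k => α (i + 1 + k)) := by
  have hpos := hi.pos
  rw [show L = (i - 1) + (L + 1 - i) by omega, upSteps_add,
    upSteps_eq_replicate fun k hk => ?_, show i - 1 + (L + 1 - i) + 1 - i = L + 1 - i by omega]
  · refine congrArg _ (upSteps_congr fun k _ => ?_)
    rw [hi.dropPeak_of_pred_le (by omega)]
    congr 1
    omega
  · rw [dropPeak_of_lt (by omega), dropPeak_of_lt (by omega)]
    exact hi.lt_succ_of_lt (by omega)

end IsFirstPeak

lemma coeffC_upSteps {a : Multiset ℤ} (ha : a.Nodup) {α : ℕ → ℤ} {i L : ℕ}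
    (hi : IsFirstPeak α i) (hiL : i ≤ L + 1) :
    coeffC a (upSteps (L + 2) α) =
      if (i : ℤ) ∈ a then coeffC ((a.erase (i : ℤ)).map (relabel i)) (upSteps L (dropPeak α i))
      else 0 := by
  rw [hi.upSteps_eq hiL, coeffC_of_firstPeak (firstPeak_replicate_append hi.pos _),
    removePeak_replicate_append hi.pos, ← hi.upSteps_dropPeak hiL]
  split_ifs with hmem
  · rw [Multiset.count_eq_one_of_mem ha hmem, show qnum 1 = 1 from rfl, one_mul]
  · rw [Multiset.count_eq_zero.mpr hmem, show qnum 0 = 0 from rfl, zero_mul]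

lemma eq_self_of_forall_succ {α : ℕ → ℤ} {m : ℕ} (h0 : α 0 = 0)
    (hup : ∀ k < m, α (k + 1) = α k + 1) : ∀ k ≤ m, α k = k := by
  intro k hk
  induction k with
  | zero => simpa using h0
  | succ k ih => rw [hup k hk, ih (by omega)]; push_cast; ring

namespace IsDyckPath

variable {L : ℕ} {α : ℕ → ℤ}

lemma sub_le (h : IsDyckPath L α) {k d : ℕ} (hkd : k + d ≤ L) : α k - d ≤ α (k + d) := by
  induction d with
  | zero => simp
  | succ d ih =>
    have := ih (by omega)
    rcases h.step (k + d) (by omega) with h' | h' <;> rw [← Nat.add_assoc, h'] <;> push_cast <;>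
      omega

lemma exists_firstPeak (h : IsDyckPath L α) (hL : 0 < L) : ∃ i, IsFirstPeak α i ∧ 2 * i ≤ L := by
  have up_of_not_down (k : ℕ) (hk : k < L) (hdown : ¬ α (k + 1) < α k) : α (k + 1) = α k + 1 :=
    (h.step k hk).resolve_right (by omega)
  have hex : ∃ k, k < L ∧ α (k + 1) < α k := by
    by_contra! hup
    have := eq_self_of_forall_succ h.zero (fun k hk => up_of_not_down k hk (hup k hk).not_gt) L le_rfl
    rw [h.last] at this
    omega
  obtain ⟨i, ⟨hiL, hdown⟩, hmin⟩ : ∃ i, (i < L ∧ α (i + 1) < α i) ∧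
      ∀ k < i, ¬ (k < L ∧ α (k + 1) < α k) :=
    ⟨Nat.find hex, Nat.find_spec hex, fun k hk => Nat.find_min hex hk⟩
  have hasc := eq_self_of_forall_succ h.zero fun k hk =>
    up_of_not_down k (by omega) fun hk' => hmin k hk ⟨by omega, hk'⟩
  have hpos : 0 < i := by
    rcases Nat.eq_zero_or_pos i with rfl | hpos
    · have := h.nonneg 1 hL
      rw [zero_add, h.zero] at hdown
      omega
    · exact hpos
  refine ⟨i, ⟨hpos, hasc, ?_⟩, ?_⟩
  · have := hasc i le_rfl
    rcases h.step i hiL with h' | h' <;> omega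
  · have := h.sub_le (k := i) (d := L - i) (by omega)
    rw [Nat.add_sub_cancel' (by omega), h.last, hasc _ le_rfl] at this
    omega

lemma dropPeak (h : IsDyckPath (L + 2) α) {i : ℕ} (hi : IsFirstPeak α i) (hiL : i ≤ L + 1) :
    IsDyckPath L (dropPeak α i) where
  step k hk := by
    rcases lt_or_ge (k + 1) i with hk' | hk'
    · rw [dropPeak_of_lt hk', dropPeak_of_lt (by omega)]
      exact h.step k (by omega)
    · rw [hi.dropPeak_of_pred_le (by omega), hi.dropPeak_of_pred_le (by omega)]
      exact h.step (k + 2) (by omega)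
  nonneg k hk := by
    unfold _root_.dropPeak
    split_ifs
    exacts [h.nonneg k (by omega), h.nonneg (k + 2) (by omega)]
  zero := by rw [dropPeak_of_lt hi.pos, h.zero]
  last := by rw [hi.dropPeak_of_pred_le (by omega), h.last]

end IsDyckPath

def succAbove (j k : ℕ) : ℕ := if k < j then k else k + 1

lemma succAbove_injective (j : ℕ) : Function.Injective (succAbove j) := by
  intro x y h
  simp only [succAbove] at h
  split_ifs at h <;> omega

lemma range_succ_erase {N j : ℕ} (hj : j ≤ N) :
    (Multiset.range (N + 1)).erase j = (Multiset.range N).map (succAbove j) := by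
  refine ((Multiset.nodup_range _).erase j).ext
    ((Multiset.nodup_range N).map (succAbove_injective j)) |>.mpr fun x => ?_
  rw [(Multiset.nodup_range _).mem_erase_iff, Multiset.mem_map]
  simp only [Multiset.mem_range, succAbove]
  constructor
  · rintro ⟨hxj, hx⟩
    refine ⟨if x < j then x else x - 1, ?_, ?_⟩ <;> split_ifs <;> omega
  · rintro ⟨k, hk, rfl⟩
    split_ifs <;> omega

lemma map_erase_map_range {F : ℕ → ℤ} (hF : Function.Injective F) {N j : ℕ} (hj : j ≤ N)
    (g : ℤ → ℤ) :
    (((Multiset.range (N + 1)).map F).erase (F j)).map g =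
      (Multiset.range N).map (g ∘ F ∘ succAbove j) := by
  rw [← Multiset.map_erase F hF, range_succ_erase hj, Multiset.map_map, Multiset.map_map]
  rfl

/-- `seqA n p p̃ e j` is `a_{j+1}` with `e j = ε_{p-j}`. -/
def seqA (n p ptil : ℕ) (e : ℕ → ℕ) (j : ℕ) : ℤ :=
  if j + 1 ≤ p then ((2 * j + ptil + 1 + e j : ℕ) : ℤ) else ((j + n : ℕ) : ℤ)

section seqA

variable {n p ptil : ℕ} {e : ℕ → ℕ}

lemma seqA_strictMono (hp : p < n ∨ p = 0) (hptil : ptil = n - 1 - p) (he : ∀ j, e j ≤ 1) :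
    StrictMono (seqA n p ptil e) :=
  strictMono_nat_of_lt_succ fun j => by
    have := he j
    unfold seqA
    split_ifs <;> omega

lemma relabel_comp_seqA_of_lt {N j₀ : ℕ} (he : ∀ j, e j ≤ 1) (hN : N = p + ptil) (hj₀ : j₀ < p) :
    relabel (seqA (N + 1) p ptil e j₀) ∘ seqA (N + 1) p ptil e ∘ succAbove j₀ =
      seqA N (p - 1) ptil (e ∘ succAbove j₀) := by
  funext k
  have := he j₀
  have := he k
  have := he (k + 1)
  simp only [relabel, seqA, succAbove, Function.comp_apply]
  split_ifs <;> push_cast at * <;> omega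

lemma relabel_comp_seqA_zero (N : ℕ) :
    relabel (seqA (N + 1) 0 N e 0) ∘ seqA (N + 1) 0 N e ∘ succAbove 0 = seqA N 0 (N - 1) e := by
  funext k
  simp only [Function.comp_apply, relabel, seqA, succAbove]
  split_ifs <;> push_cast at * <;> omega

end seqA

/-- `AboveBarrier L p̃ α` is `α ∈ 𝒟_{L,p}`. -/
def AboveBarrier (L ptil : ℕ) (α : ℕ → ℤ) : Prop :=
  ∀ k ≤ L, min (min (k : ℤ) ((L : ℤ) - (k : ℤ))) (ptil : ℤ) ≤ α k

/-- The condition `α_{L-p̃-2i-1} < α_{L-p̃-2i} ⟺ ε_i = 1` for `L = 2 (p + p̃ + 1)`, reindexed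
by `j = p - i`. -/
def StepsMatch (p ptil : ℕ) (e : ℕ → ℕ) (α : ℕ → ℤ) : Prop :=
  ∀ j < p, (α (ptil + 1 + 2 * j) < α (ptil + 2 + 2 * j) ↔ e j = 1)

namespace IsFirstPeak

variable {α : ℕ → ℤ} {i : ℕ}

lemma aboveBarrier_dropPeak_iff (hi : IsFirstPeak α i) {N ptil ptil' : ℕ} (hiN : i ≤ N + 1)
    (hlt : ptil' < i) (hle : ptil' ≤ ptil) (hmin : min (2 * N - i) ptil ≤ ptil') :
    AboveBarrier (2 * N + 2) ptil α ↔ AboveBarrier (2 * N) ptil' (dropPeak α i) := by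
  have hpeak := hi.eq_of_le i le_rfl
  constructor
  · intro h k hk
    rcases lt_or_ge k i with hki | hki
    · rw [dropPeak_of_lt hki, hi.eq_of_le k hki.le]
      omega
    · rw [hi.dropPeak_of_pred_le (by omega)]
      have := h (k + 2) (by omega)
      push_cast at this
      omega
  · intro h k hk
    rcases le_or_gt k (i + 1) with hki | hki
    · rcases hki.lt_or_eq with hki | rfl
      · rw [hi.eq_of_le k (by omega)]
        omega
      · rw [hi.succ]
        omega
    · have := h (k - 2) (by omega)
      rw [hi.dropPeak_of_pred_le (by omega), Nat.sub_add_cancel (by omega)] at this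
      push_cast [Nat.cast_sub (show 2 ≤ k by omega)] at this
      omega

lemma stepsMatch_dropPeak_iff (hi : IsFirstPeak α i) {p ptil j₀ : ℕ} {e : ℕ → ℕ}
    (he : e j₀ ≤ 1) (hj₀ : j₀ < p) (hie : i = ptil + 1 + 2 * j₀ + e j₀) :
    StepsMatch p ptil e α ↔ StepsMatch (p - 1) ptil (e ∘ succAbove j₀) (dropPeak α i) := by
  have hshift (j : ℕ) (hj : j₀ ≤ j) :
      dropPeak α i (ptil + 1 + 2 * j) = α (ptil + 1 + 2 * (j + 1)) ∧
        dropPeak α i (ptil + 2 + 2 * j) = α (ptil + 2 + 2 * (j + 1)) := by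
    rw [hi.dropPeak_of_pred_le (by omega), hi.dropPeak_of_pred_le (by omega)]
    constructor <;> congr 1
  constructor
  · intro h j hj
    simp only [Function.comp_apply, succAbove]
    split_ifs with hjj
    · rw [dropPeak_of_lt (by omega), dropPeak_of_lt (by omega)]
      exact h j (by omega)
    · rw [(hshift j (by omega)).1, (hshift j (by omega)).2]
      exact h (j + 1) (by omega)
  · intro h j hj
    rcases lt_trichotomy j j₀ with hjj | rfl | hjj
    · have := h j (by omega)
      rwa [Function.comp_apply, succAbove, if_pos hjj, dropPeak_of_lt (by omega),
        dropPeak_of_lt (by omega)] at this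
    -- the peak itself: `e j = 0` puts the step at the descent `i`, `e j = 1` at the ascent `i - 1`
    · rcases Nat.le_one_iff_eq_zero_or_eq_one.mp he with h0 | h1
      · rw [h0, show ptil + 1 + 2 * j = i by omega, show ptil + 2 + 2 * j = i + 1 by omega]
        simpa using hi.succ_lt.not_gt
      · rw [h1, show ptil + 1 + 2 * j = i - 1 by omega, show ptil + 2 + 2 * j = i - 1 + 1 by omega]
        simpa using hi.lt_succ_of_lt (by omega)
    · have := h (j - 1) (by omega)
      rwa [(hshift (j - 1) (by omega)).1, (hshift (j - 1) (by omega)).2, Function.comp_apply,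
        succAbove, if_neg (by omega), Nat.sub_add_cancel (by omega)] at this

lemma exists_seqA_eq (hi : IsFirstPeak α i) {n p ptil : ℕ} {e : ℕ → ℕ} (he : ∀ j, e j ≤ 1)
    (hn : n = p + ptil + 1) (hin : i ≤ n) (hB : AboveBarrier (2 * n) ptil α)
    (hS : StepsMatch p ptil e α) : ∃ j < n, seqA n p ptil e j = i := by
  have hpos := hi.pos
  have hpeak := hi.eq_of_le i le_rfl
  have hlt : ptil < i := by
    have := hB (i + 1) (by omega)
    rw [hi.succ] at this
    push_cast at this
    omega
  obtain ⟨j, hj⟩ := Nat.even_or_odd' (i - ptil - 1)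
  by_cases hjp : j < p
  · refine ⟨j, by omega, ?_⟩
    have hstep := hS j hjp
    have := he j
    rw [seqA, if_pos (by omega)]
    rcases hj with hj | hj
    · rw [show ptil + 1 + 2 * j = i by omega, show ptil + 2 + 2 * j = i + 1 by omega] at hstep
      have : e j ≠ 1 := fun h1 => hi.succ_lt.not_gt (hstep.mpr h1)
      omega
    · rw [show ptil + 1 + 2 * j = i - 1 by omega, show ptil + 2 + 2 * j = i - 1 + 1 by omega]
        at hstep
      have := hstep.mp (hi.lt_succ_of_lt (by omega))
      omega
  · refine ⟨0, by omega, ?_⟩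
    rw [seqA, if_neg (by omega)]
    omega

end IsFirstPeak

open Classical in
theorem coeffC_seqA_upSteps (n p ptil : ℕ) (hp : p < n ∨ p = 0) (hptil : ptil = n - 1 - p)
    (e : ℕ → ℕ) (he : ∀ j, e j ≤ 1) (α : ℕ → ℤ) (hα : IsDyckPath (2 * n) α) :
    coeffC ((Multiset.range n).map (seqA n p ptil e)) (upSteps (2 * n) α) =
      if AboveBarrier (2 * n) ptil α ∧ StepsMatch p ptil e α then 1 else 0 := by
  induction n generalizing p ptil e α with
  | zero =>
    obtain rfl : p = 0 := by omega
    rw [if_pos ⟨fun k hk => by simp [Nat.le_zero.mp hk, hα.zero], fun j hj => absurd hj j.not_lt_zero⟩]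
    rfl
  | succ N ih =>
    obtain ⟨i, hi, hiN⟩ := hα.exists_firstPeak (by omega)
    have hmono := seqA_strictMono hp hptil he
    rw [show 2 * (N + 1) = 2 * N + 2 by ring] at hα ⊢
    rw [coeffC_upSteps ((Multiset.nodup_range _).map hmono.injective) hi (by omega)]
    have hα' := hα.dropPeak hi (by omega)
    by_cases hmem : (i : ℤ) ∈ (Multiset.range (N + 1)).map (seqA (N + 1) p ptil e)
    · rw [if_pos hmem]
      obtain ⟨j₀, hj₀, hj₀i⟩ := Multiset.mem_map.mp hmem
      rw [Multiset.mem_range] at hj₀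
      rw [← hj₀i, map_erase_map_range hmono.injective (by omega)]
      by_cases hj₀p : j₀ < p
      · have hie : i = ptil + 1 + 2 * j₀ + e j₀ := by
          rw [seqA, if_pos (by omega)] at hj₀i
          omega
        rw [relabel_comp_seqA_of_lt he (by omega) hj₀p,
          ih (p - 1) ptil (by omega) (by omega) (e ∘ succAbove j₀) (fun k => he _) _ hα']
        exact if_congr (and_congr
          (hi.aboveBarrier_dropPeak_iff (by omega) (by omega) le_rfl (min_le_right _ _)).symm
          (hi.stepsMatch_dropPeak_iff (he j₀) hj₀p hie).symm) rfl rfl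
      · obtain ⟨rfl, rfl, rfl, rfl⟩ : p = 0 ∧ j₀ = 0 ∧ N = ptil ∧ i = N + 1 := by
          rw [seqA, if_neg (by omega)] at hj₀i
          omega
        rw [relabel_comp_seqA_zero, ih 0 (N - 1) (Or.inr rfl) (by omega) e he _ hα']
        refine if_congr (and_congr
          (hi.aboveBarrier_dropPeak_iff le_rfl (by omega) (by omega) (by omega)).symm ?_) rfl rfl
        simp [StepsMatch]
    · rw [if_neg hmem, if_neg]
      rintro ⟨hB, hS⟩
      obtain ⟨j, hj, hji⟩ := hi.exists_seqA_eq he (by omega) (by omega)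
        ((show 2 * N + 2 = 2 * (N + 1) by ring) ▸ hB) hS
      exact hmem (Multiset.mem_map.mpr ⟨j, Multiset.mem_range.mpr hj, hji⟩)

lemma stepsMatch_rev_iff {n p ptil : ℕ} {ε : ℕ → ℕ} {α : ℕ → ℤ} (hp : p + 1 ≤ n)
    (hptil : ptil = n - 1 - p) :
    StepsMatch p ptil (fun j => ε (p - j)) α ↔
      ∀ i, 1 ≤ i → i ≤ p →
        (α (2 * n - ptil - 2 * i - 1) < α (2 * n - ptil - 2 * i) ↔ ε i = 1) := by
  constructor
  · intro h i hi1 hip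
    have := h (p - i) (by omega)
    dsimp only at this
    rwa [Nat.sub_sub_self hip, show ptil + 1 + 2 * (p - i) = 2 * n - ptil - 2 * i - 1 by omega,
      show ptil + 2 + 2 * (p - i) = 2 * n - ptil - 2 * i by omega] at this
  · intro h j hj
    have := h (p - j) (by omega) (by omega)
    rwa [show 2 * n - ptil - 2 * (p - j) - 1 = ptil + 1 + 2 * j by omega,
      show 2 * n - ptil - 2 * (p - j) = ptil + 2 + 2 * j by omega] at this

open Classical in
theorem coeffC_eq_ite_general (n p ptil L : ℕ) (hp : p + 1 ≤ n)
    (hptil : ptil = n - 1 - p) (hL : L = 2 * n)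
    (εf : ℕ → ℕ) (hεf : ∀ i, εf i ≤ 1)
    (α : ℕ → ℤ)
    (hstep : ∀ i < L, α (i + 1) = α i + 1 ∨ α (i + 1) = α i - 1)
    (hnonneg : ∀ i ≤ L, 0 ≤ α i)
    (h0 : α 0 = 0) (hend : α L = 0) :
    coeffC
        (Multiset.map
          (fun j : ℕ =>
            if j + 1 ≤ p then ((2 * j + ptil + 1 + εf (p - j) : ℕ) : ℤ)
            else ((j + n : ℕ) : ℤ))
          (Multiset.range n))
        ((List.range L).map fun j => decide (α j < α (j + 1))) =
      if ((∀ i ≤ L, min (min (i : ℤ) ((L : ℤ) - (i : ℤ))) (ptil : ℤ) ≤ α i) ∧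
          ∀ i, 1 ≤ i → i ≤ p →
            (α (L - ptil - 2 * i - 1) < α (L - ptil - 2 * i) ↔ εf i = 1)) then 1 else 0 := by
  subst hL
  refine (coeffC_seqA_upSteps n p ptil (Or.inl hp) hptil (fun j => εf (p - j)) (fun j => hεf _) α
    ⟨hstep, hnonneg, h0, hend⟩).trans ?_
  congr 1
  exact propext (and_congr Iff.rfl (stepsMatch_rev_iff hp hptil))

open Classical in
/-- Lemma 1 of the paper: for even size `L = 2n`, `0 ≤ p ≤ n-1`, `p̃ = n-1-p` and
    `ε ∈ {0,1}^p`, with `a_ℓ = 2ℓ + p̃ - 1 + ε_{p+1-ℓ}` for `1 ≤ ℓ ≤ p` and `a_ℓ = ℓ + n - 1`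
    for `p+1 ≤ ℓ ≤ n`, the coefficient `C_{a;α}` equals `1` if `α ∈ 𝒟_{L,p}` and
    `α_{L-p̃-2i-1} < α_{L-p̃-2i} ⟺ ε_i = 1` for all `1 ≤ i ≤ p`, and equals `0` otherwise. -/
theorem coeffC_eq_ite (n p ptil L : ℕ) (hn : 1 ≤ n) (hp : p + 1 ≤ n)
    (hptil : ptil = n - 1 - p) (hL : L = 2 * n)
    (εf : ℕ → ℕ) (hεf : ∀ i, εf i ≤ 1)
    (α : ℕ → ℤ)
    (hstep : ∀ i < L, α (i + 1) = α i + 1 ∨ α (i + 1) = α i - 1)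
    (hnonneg : ∀ i ≤ L, 0 ≤ α i)
    (h0 : α 0 = 0) (hend : α L = 0) :
    coeffC
        (Multiset.map
          (fun j : ℕ =>
            if j + 1 ≤ p then ((2 * j + ptil + 1 + εf (p - j) : ℕ) : ℤ)
            else ((j + n : ℕ) : ℤ))
          (Multiset.range n))
        ((List.range L).map fun j => decide (α j < α (j + 1))) =
      if ((∀ i ≤ L, min (min (i : ℤ) ((L : ℤ) - (i : ℤ))) (ptil : ℤ) ≤ α i) ∧
          ∀ i, 1 ≤ i → i ≤ p →
            (α (L - ptil - 2 * i - 1) < α (L - ptil - 2 * i) ↔ εf i = 1)) then 1 else 0 :=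
  coeffC_eq_ite_general n p ptil L hp hptil hL εf hεf α hstep hnonneg h0 hend
end

section
/- Let L = 2n be even, let 0 ≤ p ≤ n−1, set p̃ = n−1−p, and let α ∈ 𝒟_{L,p}. For 1 ≤ i ≤ p define ε_i := (α_{L−p̃−2i} − α_{L−p̃−2i−1} + 1)/2, which lies in {0,1}. Then (−1)^{p̃} · Σ_{i=2}^{L−1} (−1)^i (α_i − Ω(L,p)_i) = 2·Σ_{i=1}^{p} ε_i; in other words, the signed-area statistic c_{α,p} = ((−1)^{p̃}/2)·Σ_{i=2}^{L−1} (−1)^i (α_i − Ω(L,p)_i) equals Σ_{i=1}^{p} ε_i. -/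
open Finset

/-!
Inside the strip `min(i, L - i) ≤ p̃` a path of `𝒟_{L,p}` is pinned to the boundary
`min(i, L - i)`, so it agrees with `Ω(L,p)` there and only the window
`p̃ < i < L - p̃` contributes. On the window `Ω(L,p)` alternates between `p̃` and `p̃ + 1`,
so the alternating sum telescopes over consecutive pairs `(p̃ + 2j - 1, p̃ + 2j)` into
`∑ⱼ (α_{p̃+2j} - α_{p̃+2j-1} + 1) = 2 ∑ⱼ ε_{p+1-j}`; the unpaired last term vanishes because
parity and the bound `α_i ≤ L - i` force `α_{L-p̃-1} = p̃ + 1`.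
-/

theorem sum_Icc_one_reflect {M : Type*} [AddCommMonoid M] (f : ℕ → M) (p : ℕ) :
    ∑ i ∈ Icc 1 p, f (p + 1 - i) = ∑ i ∈ Icc 1 p, f i := by
  refine sum_nbij' (fun i => p + 1 - i) (fun i => p + 1 - i) ?_ ?_ ?_ ?_ ?_ <;>
    (intro a ha; simp only [mem_Icc] at *) <;> omega

theorem sum_Icc_one_neg_one_pow_mul (g : ℕ → ℤ) (p : ℕ) :
    ∑ k ∈ Icc 1 (2 * p + 1), (-1 : ℤ) ^ k * g k
      = ∑ j ∈ Icc 1 p, (g (2 * j) - g (2 * j - 1)) - g (2 * p + 1) := by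
  induction p with
  | zero => simp
  | succ p ih =>
    rw [show 2 * (p + 1) + 1 = 2 * p + 1 + 1 + 1 by ring, sum_Icc_succ_top (by omega),
      sum_Icc_succ_top (by omega), ih, sum_Icc_succ_top (by omega),
      show 2 * (p + 1) = 2 * p + 1 + 1 by ring, Nat.add_sub_cancel,
      Even.neg_one_pow (n := 2 * p + 1 + 1) ⟨p + 1, by ring⟩,
      Odd.neg_one_pow (n := 2 * p + 1 + 1 + 1) ⟨p + 1, by ring⟩]
    ring

/-- The path `Ω(L,p)`, with `ptil` standing for `p̃`. -/
def omegaPath (L ptil i : ℕ) : ℤ :=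
  min (min (i : ℤ) ((L : ℤ) - (i : ℤ))) ((ptil : ℤ) + (if i % 2 = ptil % 2 then 0 else 1))

theorem omegaPath_of_mem_window {L ptil i : ℕ} (hi : ptil < i) (hiL : ptil + i < L) :
    omegaPath L ptil i = ptil + (if i % 2 = ptil % 2 then 0 else 1) := by
  unfold omegaPath
  split_ifs <;> omega

section Path

variable {α : ℕ → ℤ} {L : ℕ} (hstep : ∀ i < L, α (i + 1) = α i + 1 ∨ α (i + 1) = α i - 1)
include hstep

theorem abs_sub_le_of_steps {i j : ℕ} (hij : i ≤ j) (hj : j ≤ L) :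
    |α j - α i| ≤ (j : ℤ) - i := by
  induction j, hij using Nat.le_induction with
  | base => simp
  | succ j hij ih =>
    have := ih (by omega)
    rcases hstep j (by omega) with h | h <;> rw [h, abs_le] at * <;> push_cast <;> omega

theorem sub_emod_two_of_steps {i j : ℕ} (hij : i ≤ j) (hj : j ≤ L) :
    (α j - α i) % 2 = ((j : ℤ) - i) % 2 := by
  induction j, hij using Nat.le_induction with
  | base => simp
  | succ j hij ih =>
    have := ih (by omega)
    rcases hstep j (by omega) with h | h <;> rw [h] <;> push_cast <;> omega

theorem two_mul_step_add_one_div_two {m : ℕ} (hm : 1 ≤ m) (hmL : m ≤ L) :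
    2 * ((α m - α (m - 1) + 1) / 2) = α m - α (m - 1) + 1 := by
  obtain ⟨k, rfl⟩ := Nat.exists_eq_add_of_le' hm
  rcases hstep k (by omega) with h | h <;> simp only [Nat.add_sub_cancel, h] <;> omega

variable (h0 : α 0 = 0) (hend : α L = 0)
include h0 hend

theorem le_min_of_steps {i : ℕ} (hi : i ≤ L) : α i ≤ min (i : ℤ) ((L : ℤ) - i) := by
  have hleft := abs_sub_le_of_steps hstep (Nat.zero_le i) hi
  have hright := abs_sub_le_of_steps hstep hi le_rfl
  rw [abs_le] at hleft hright
  simp only [h0, hend, Nat.cast_zero] at hleft hright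
  omega

variable {ptil : ℕ} (hD : ∀ i ≤ L, min (min (i : ℤ) ((L : ℤ) - (i : ℤ))) (ptil : ℤ) ≤ α i)
include hD

theorem eq_omegaPath_of_min_le {i : ℕ} (hi : i ≤ L) (hmin : min i (L - i) ≤ ptil) :
    α i = omegaPath L ptil i := by
  have hle := le_min_of_steps hstep h0 hend hi
  have hge := hD i hi
  unfold omegaPath
  split_ifs <;> omega

theorem eq_omegaPath_one (hL : 2 ≤ L) : α 1 = omegaPath L ptil 1 := by
  have hle := le_min_of_steps hstep h0 hend (i := 1) (by omega)
  have hge := hD 1 (by omega)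
  have hpar := sub_emod_two_of_steps hstep (Nat.zero_le 1) (by omega)
  rw [h0] at hpar
  unfold omegaPath
  split_ifs <;> push_cast at * <;> omega

theorem eq_of_window_end (hL : Even L) (hptil : 2 * ptil + 2 ≤ L) :
    α (L - ptil - 1) = ptil + 1 := by
  have hle := le_min_of_steps hstep h0 hend (i := L - ptil - 1) (by omega)
  have hge := hD (L - ptil - 1) (by omega)
  have hpar := sub_emod_two_of_steps hstep (Nat.sub_le L (ptil + 1)) le_rfl
  obtain ⟨m, rfl⟩ := hL
  rw [hend, Nat.sub_sub] at *
  push_cast [Nat.cast_sub hptil, Nat.cast_sub (show ptil + 1 ≤ m + m by omega)] at *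
  omega

theorem sum_signed_diff_eq_sum_window {p : ℕ} (hL : L = 2 * ptil + 2 * p + 2) :
    ∑ i ∈ Icc 2 (L - 1), (-1 : ℤ) ^ i * (α i - omegaPath L ptil i)
      = ∑ k ∈ Icc 1 (2 * p + 1),
          (-1 : ℤ) ^ (ptil + k) * (α (ptil + k) - omegaPath L ptil (ptil + k)) := by
  set T : ℕ → ℤ := fun i => (-1 : ℤ) ^ i * (α i - omegaPath L ptil i)
  have hT : ∀ i ≤ L, α i = omegaPath L ptil i → T i = 0 := fun i _ h => by simp [T, h]
  calc ∑ i ∈ Icc 2 (L - 1), T i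
      = ∑ i ∈ Icc 1 (L - 1), T i := by
        refine sum_subset (Icc_subset_Icc_left one_le_two) fun i hi hi' => ?_
        simp only [mem_Icc] at hi hi'
        obtain rfl : i = 1 := by omega
        exact hT 1 (by omega) (eq_omegaPath_one hstep h0 hend hD (by omega))
    _ = ∑ i ∈ Icc (ptil + 1) (ptil + (2 * p + 1)), T i := by
        refine (sum_subset (Icc_subset_Icc (by omega) (by omega)) fun i hi hi' => ?_).symm
        simp only [mem_Icc] at hi hi'
        exact hT i (by omega) (eq_omegaPath_of_min_le hstep h0 hend hD (by omega) (by omega))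
    _ = ∑ k ∈ Icc 1 (2 * p + 1), T (ptil + k) := by
        rw [← map_add_left_Icc, sum_map]
        rfl

theorem signed_area_eq_sum_steps {p : ℕ} (hL : L = 2 * ptil + 2 * p + 2) :
    (-1 : ℤ) ^ ptil * ∑ i ∈ Icc 2 (L - 1), (-1 : ℤ) ^ i * (α i - omegaPath L ptil i)
      = ∑ j ∈ Icc 1 p, (α (ptil + 2 * j) - α (ptil + 2 * j - 1) + 1) := by
  set g : ℕ → ℤ := fun k => α (ptil + k) - (ptil + if k % 2 = 0 then 0 else 1)
  have hwindow : ∀ k ∈ Icc 1 (2 * p + 1), (-1 : ℤ) ^ ptil *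
      ((-1 : ℤ) ^ (ptil + k) * (α (ptil + k) - omegaPath L ptil (ptil + k)))
        = (-1 : ℤ) ^ k * g k := by
    intro k hk
    rw [mem_Icc] at hk
    rw [omegaPath_of_mem_window (by omega) (by omega), pow_add, ← mul_assoc, ← mul_assoc,
      ← pow_add, Even.neg_one_pow ⟨ptil, rfl⟩, one_mul, if_congr (Q := k % 2 = 0) (by omega) rfl rfl]
  have hlast : g (2 * p + 1) = 0 := by
    have := eq_of_window_end hstep h0 hend hD ⟨ptil + p + 1, by omega⟩ (by omega)
    rw [show L - ptil - 1 = ptil + (2 * p + 1) by omega] at this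
    simp [g, this]
  rw [sum_signed_diff_eq_sum_window hstep h0 hend hD hL, mul_sum, sum_congr rfl hwindow,
    sum_Icc_one_neg_one_pow_mul, hlast, sub_zero]
  refine sum_congr rfl fun j hj => ?_
  rw [mem_Icc] at hj
  simp only [g, Nat.mul_mod_right, if_pos, show (2 * j - 1) % 2 ≠ 0 by omega, if_false,
    show ptil + (2 * j - 1) = ptil + 2 * j - 1 by omega]
  ring

end Path

theorem signed_area_eq_two_mul_sum_eps_general (n p : ℕ) (hp : p + 1 ≤ n)
    (L : ℕ) (hL : L = 2 * n) (ptil : ℕ) (hptil : ptil = n - 1 - p)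
    (α : ℕ → ℤ)
    (hstep : ∀ i < L, α (i + 1) = α i + 1 ∨ α (i + 1) = α i - 1)
    (h0 : α 0 = 0) (hend : α L = 0)
    (hD : ∀ i ≤ L, min (min (i : ℤ) ((L : ℤ) - (i : ℤ))) (ptil : ℤ) ≤ α i) :
    (-1 : ℤ) ^ ptil *
        ∑ i ∈ Finset.Icc 2 (L - 1),
          (-1 : ℤ) ^ i *
            (α i -
              min (min (i : ℤ) ((L : ℤ) - (i : ℤ)))
                ((ptil : ℤ) + (if i % 2 = ptil % 2 then 0 else 1))) =
      2 * ∑ i ∈ Finset.Icc 1 p, (α (L - ptil - 2 * i) - α (L - ptil - 2 * i - 1) + 1) / 2 := by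
  have hL' : L = 2 * ptil + 2 * p + 2 := by omega
  change (-1 : ℤ) ^ ptil * ∑ i ∈ Icc 2 (L - 1), (-1 : ℤ) ^ i * (α i - omegaPath L ptil i) = _
  rw [signed_area_eq_sum_steps hstep h0 hend hD hL', mul_sum,
    ← sum_Icc_one_reflect (fun j => α (ptil + 2 * j) - α (ptil + 2 * j - 1) + 1)]
  refine sum_congr rfl fun i hi => ?_
  rw [mem_Icc] at hi
  rw [show L - ptil - 2 * i = ptil + 2 * (p + 1 - i) by omega,
    two_mul_step_add_one_div_two hstep (by omega) (by omega)]

/-- The signed-area statistic identity: for `L = 2n` even, `0 ≤ p ≤ n-1`, `p̃ = n-1-p`, and a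
    Dyck path `α ∈ 𝒟_{L,p}` (all local minima at height `≥ p̃`), with
    `Ω(L,p)_i = min(i, L-i, p̃ + δ_i)` (`δ_i = 0` iff `i ≡ p̃ (mod 2)`) and
    `ε_i = (α_{L-p̃-2i} - α_{L-p̃-2i-1} + 1)/2 ∈ {0,1}`, one has
    `(-1)^p̃ ∑_{i=2}^{L-1} (-1)^i (α_i - Ω(L,p)_i) = 2 ∑_{i=1}^{p} ε_i`. -/
theorem signed_area_eq_two_mul_sum_eps (n p : ℕ) (hn : 1 ≤ n) (hp : p + 1 ≤ n)
    (L : ℕ) (hL : L = 2 * n) (ptil : ℕ) (hptil : ptil = n - 1 - p)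
    (α : ℕ → ℤ)
    (hstep : ∀ i < L, α (i + 1) = α i + 1 ∨ α (i + 1) = α i - 1)
    (hnonneg : ∀ i ≤ L, 0 ≤ α i)
    (h0 : α 0 = 0) (hend : α L = 0)
    (hD : ∀ i ≤ L, min (min (i : ℤ) ((L : ℤ) - (i : ℤ))) (ptil : ℤ) ≤ α i) :
    (-1 : ℤ) ^ ptil *
        ∑ i ∈ Finset.Icc 2 (L - 1),
          (-1 : ℤ) ^ i *
            (α i -
              min (min (i : ℤ) ((L : ℤ) - (i : ℤ)))
                ((ptil : ℤ) + (if i % 2 = ptil % 2 then 0 else 1))) =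
      2 * ∑ i ∈ Finset.Icc 1 p, (α (L - ptil - 2 * i) - α (L - ptil - 2 * i - 1) + 1) / 2 :=
  signed_area_eq_two_mul_sum_eps_general n p hp L hL ptil hptil α hstep h0 hend hD
end

section
/- Let τ be an indeterminate and work with Laurent polynomials in u over ℤ[τ, τ^{−1}]. For all integers ℓ ≥ 1, m ≥ 1 and p̃ ≥ 1, the coefficient of u^0 (constant term) in (1 + τ^{−1}·u) · u^{ℓ−m+p̃} · (τ + u)^{ℓ+p̃−1} · (τ + u^{−1})^{m+p̃} equals Σ_{r=ℓ}^{2m} τ^{p̃+2m+2ℓ−2r−1} · C(ℓ+p̃, r−ℓ) · C(m+p̃, 2m−r), where negative powers of τ are interpreted in ℤ[τ, τ^{−1}]. -/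
/-!
Since `τ⁻¹ τ = 1`, we have `1 + τ⁻¹u = τ⁻¹(τ + u)` and `τ + u⁻¹ = u⁻¹(1 + τu)`, so the product is
`τ⁻¹ u^{ℓ-2m} (τ + u)^{ℓ+p̃} (1 + τu)^{m+p̃}` with a genuine polynomial in `u` at the end. Its
constant term is `τ⁻¹` times the coefficient of `u^{2m-ℓ}` in that polynomial: zero when `ℓ > 2m`,
and otherwise the binomial convolution `∑ₛ C(ℓ+p̃, s) τ^{ℓ+p̃-s} C(m+p̃, 2m-ℓ-s) τ^{2m-ℓ-s}`,
which is the stated sum after putting `r = ℓ + s`.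
-/

open LaurentPolynomial Finset

open Polynomial

lemma intChoose_natCast (a b : ℕ) : intChoose a b = a.choose b := by
  simp [intChoose]

namespace Polynomial

section Semiring

variable {R : Type*} [Semiring R]

lemma coeff_toLaurent_natCast (f : R[X]) (n : ℕ) : (toLaurent f).coeff n = f.coeff n :=
  Finsupp.mapDomain_apply Nat.cast_injective _ n

lemma coeff_toLaurent_of_neg (f : R[X]) {n : ℤ} (hn : n < 0) : (toLaurent f).coeff n = 0 :=
  Finsupp.mapDomain_of_notMem_range _ _ fun ⟨k, hk⟩ => by
    change (k : ℤ) = n at hk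
    omega

end Semiring

variable {R : Type*} [CommSemiring R]

lemma coeff_one_add_C_mul_X_pow (y : R) (B j : ℕ) :
    ((1 + C y * X) ^ B).coeff j = B.choose j * y ^ j := by
  have : (1 + C y * X) ^ B = ((1 + X) ^ B).comp (C y * X) := by
    simp only [pow_comp, add_comp, one_comp, X_comp]
  rw [this, comp_C_mul_X_coeff, coeff_one_add_X_pow]

lemma coeff_X_add_C_pow_mul_one_add_C_mul_X_pow (x y : R) (A B n : ℕ) :
    ((X + C x) ^ A * (1 + C y * X) ^ B).coeff n =
      ∑ s ∈ range (n + 1), A.choose s * B.choose (n - s) * x ^ (A - s) * y ^ (n - s) := by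
  rw [coeff_mul, Finset.Nat.sum_antidiagonal_eq_sum_range_succ_mk]
  refine Finset.sum_congr rfl fun s _ => ?_
  rw [coeff_X_add_C_pow, coeff_one_add_C_mul_X_pow]
  ring

end Polynomial

namespace LaurentPolynomial

lemma coeff_C_mul_T_mul {R : Type*} [Semiring R] (c : R) (m n : ℤ) (f : R[T;T⁻¹]) :
    (C c * T m * f).coeff n = c * f.coeff (n - m) := by
  rw [← single_eq_C_mul_T, AddMonoidAlgebra.coeff_single_mul_apply, neg_add_eq_sub]

variable {R : Type*} [CommSemiring R]

lemma one_add_C_mul_T_one {x y : R} (hxy : y * x = 1) :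
    (1 + C y * T 1 : R[T;T⁻¹]) = C y * (C x + T 1) := by
  rw [mul_add, ← map_mul, hxy, map_one]

lemma C_add_T_neg_one (x : R) : (C x + T (-1) : R[T;T⁻¹]) = T (-1) * (1 + C x * T 1) := by
  rw [mul_add, mul_one, mul_left_comm, ← T_add, neg_add_cancel, T_zero, mul_one, add_comm]

lemma prod_eq_C_mul_T_mul_toLaurent {x y : R} (hxy : y * x = 1) (d : ℤ) (a b : ℕ) :
    (1 + C y * T 1) * T d * (C x + T 1) ^ a * (C x + T (-1)) ^ b =
      C y * T (d - b) *
        toLaurent ((X + Polynomial.C x) ^ (a + 1) * (1 + Polynomial.C x * X) ^ b) := by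
  simp only [map_mul, map_pow, map_add, map_one, toLaurent_X, toLaurent_C,
    one_add_C_mul_T_one hxy, C_add_T_neg_one, mul_pow, T_pow, mul_neg_one, T_sub]
  ring

lemma T_neg_one_mul_choose_mul_choose (A B s n : ℕ) :
    T (-1) * ((A.choose s : R[T;T⁻¹]) * (B.choose n : R[T;T⁻¹]) * T 1 ^ (A - s) * T 1 ^ n) =
      C (A.choose s * B.choose n : R) * T ((A : ℤ) - s + n - 1) := by
  rcases le_or_gt s A with hs | hs
  · have he : (A : ℤ) - s + n - 1 = -1 + (A - s : ℕ) + n := by push_cast [hs]; ring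
    rw [map_mul, map_natCast, map_natCast, he, T_add, T_add, T_pow, T_pow, mul_one, mul_one]
    ring
  · simp [Nat.choose_eq_zero_of_lt hs]

end LaurentPolynomial

theorem odd_size_constant_term_Sminus_general (ℓ m ptil : ℕ) (hℓ : 1 ≤ ℓ) :
    ((1 + LaurentPolynomial.C (LaurentPolynomial.T (-1 : ℤ)) * LaurentPolynomial.T 1) *
          LaurentPolynomial.T ((ℓ : ℤ) - (m : ℤ) + (ptil : ℤ)) *
          (LaurentPolynomial.C (LaurentPolynomial.T (1 : ℤ)) +
              LaurentPolynomial.T 1) ^ (ℓ + ptil - 1) *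
          (LaurentPolynomial.C (LaurentPolynomial.T (1 : ℤ)) +
              LaurentPolynomial.T (-1)) ^ (m + ptil) :
        LaurentPolynomial (LaurentPolynomial ℤ)).coeff 0 =
      ∑ r ∈ Finset.Icc ℓ (2 * m),
        LaurentPolynomial.C
            (intChoose ((ℓ : ℤ) + (ptil : ℤ)) ((r : ℤ) - (ℓ : ℤ)) *
              intChoose ((m : ℤ) + (ptil : ℤ)) (2 * (m : ℤ) - (r : ℤ))) *
          LaurentPolynomial.T
            ((ptil : ℤ) + 2 * (m : ℤ) + 2 * (ℓ : ℤ) - 2 * (r : ℤ) - 1) := by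
  obtain ⟨a, ha⟩ : ∃ a, ℓ + ptil = a + 1 := ⟨ℓ + ptil - 1, by omega⟩
  have hτ : (T (-1) * T 1 : ℤ[T;T⁻¹]) = 1 := by rw [← T_add, neg_add_cancel, T_zero]
  rw [show ℓ + ptil - 1 = a by omega, prod_eq_C_mul_T_mul_toLaurent hτ, coeff_C_mul_T_mul, ← ha]
  rcases le_or_gt ℓ (2 * m) with hle | hgt
  · obtain ⟨N, hN⟩ : ∃ N, 2 * m = ℓ + N := ⟨2 * m - ℓ, by omega⟩
    rw [show (0 : ℤ) - ((ℓ : ℤ) - m + ptil - (m + ptil : ℕ)) = N by omega,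
      coeff_toLaurent_natCast, coeff_X_add_C_pow_mul_one_add_C_mul_X_pow, Finset.mul_sum,
      ← Finset.Ico_add_one_right_eq_Icc, Finset.sum_Ico_eq_sum_range,
      show 2 * m + 1 - ℓ = N + 1 by omega]
    refine Finset.sum_congr rfl fun s hs => ?_
    have hsN : s ≤ N := Nat.lt_succ_iff.mp (Finset.mem_range.mp hs)
    rw [T_neg_one_mul_choose_mul_choose,
      show (ℓ : ℤ) + ptil = (ℓ + ptil : ℕ) by push_cast; ring,
      show ((ℓ + s : ℕ) : ℤ) - ℓ = s by push_cast; ring,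
      show (m : ℤ) + ptil = (m + ptil : ℕ) by push_cast; ring,
      show 2 * (m : ℤ) - (ℓ + s : ℕ) = (N - s : ℕ) by omega,
      intChoose_natCast, intChoose_natCast]
    congr 2
    omega
  · rw [coeff_toLaurent_of_neg _ (by omega), Finset.Icc_eq_empty (by omega), Finset.sum_empty,
      mul_zero]

/-- Entrywise constant-term evaluation for the odd-size partial sums at `t = τ⁻¹`: the
    coefficient of `u^0` in `(1 + τ⁻¹u) u^{ℓ-m+p̃} (τ+u)^{ℓ+p̃-1} (τ+u⁻¹)^{m+p̃}`, a Laurent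
    polynomial in `u` over `ℤ[τ,τ⁻¹]`, equals
    `∑_{r=ℓ}^{2m} τ^{p̃+2m+2ℓ-2r-1} C(ℓ+p̃, r-ℓ) C(m+p̃, 2m-r)`. -/
theorem odd_size_constant_term_Sminus (ℓ m ptil : ℕ) (hℓ : 1 ≤ ℓ) (hm : 1 ≤ m)
    (hptil : 1 ≤ ptil) :
    ((1 + LaurentPolynomial.C (LaurentPolynomial.T (-1 : ℤ)) * LaurentPolynomial.T 1) *
          LaurentPolynomial.T ((ℓ : ℤ) - (m : ℤ) + (ptil : ℤ)) *
          (LaurentPolynomial.C (LaurentPolynomial.T (1 : ℤ)) +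
              LaurentPolynomial.T 1) ^ (ℓ + ptil - 1) *
          (LaurentPolynomial.C (LaurentPolynomial.T (1 : ℤ)) +
              LaurentPolynomial.T (-1)) ^ (m + ptil) :
        LaurentPolynomial (LaurentPolynomial ℤ)).coeff 0 =
      ∑ r ∈ Finset.Icc ℓ (2 * m),
        LaurentPolynomial.C
            (intChoose ((ℓ : ℤ) + (ptil : ℤ)) ((r : ℤ) - (ℓ : ℤ)) *
              intChoose ((m : ℤ) + (ptil : ℤ)) (2 * (m : ℤ) - (r : ℤ))) *
          LaurentPolynomial.T
            ((ptil : ℤ) + 2 * (m : ℤ) + 2 * (ℓ : ℤ) - 2 * (r : ℤ) - 1) :=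
  odd_size_constant_term_Sminus_general ℓ m ptil hℓ
end

section
/- Let p ≥ 1 and let τ be an indeterminate. In the polynomial ring ℤ[τ][v_1, …, v_p] the following identity holds: Σ_{σ ∈ S_p} sgn(σ) · ∏_{ℓ=1}^{p} v_{σ(ℓ)}^{ℓ} (τ + v_{σ(ℓ)})^{ℓ−1} = ∏_{ℓ=1}^{p} v_ℓ · ∏_{1≤ℓ<m≤p} (v_m − v_ℓ)(τ + v_ℓ + v_m). -/
open MvPolynomial Finset

/-!
Writing `y_m = v_m (τ + v_m)`, the `ℓ`-th factor of each summand is `v_{σ ℓ} · y_{σ ℓ}^{ℓ-1}`, so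
the left-hand side is the determinant of the Vandermonde matrix of the `y_m` with row `m` scaled
by `v_m`. It therefore equals `∏ v_m · ∏_{ℓ<m} (y_m - y_ℓ)`, and
`y_m - y_ℓ = (v_m - v_ℓ)(τ + v_ℓ + v_m)`.
-/

theorem mul_add_self_sub_mul_add_self {R : Type*} [CommRing R] (t a b : R) :
    b * (t + b) - a * (t + a) = (b - a) * (t + a + b) := by
  ring

theorem sum_sign_smul_prod_mul_pow_eq {R : Type*} [CommRing R] {n : ℕ} (x y : Fin n → R) :
    ∑ σ : Equiv.Perm (Fin n), (Equiv.Perm.sign σ : ℤ) • ∏ ℓ : Fin n, x (σ ℓ) * y (σ ℓ) ^ (ℓ : ℕ) =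
      (∏ i, x i) * ∏ i : Fin n, ∏ j ∈ Ioi i, (y j - y i) := by
  rw [← Matrix.det_vandermonde, ← Matrix.det_mul_column, Matrix.det_apply]
  simp [Units.smul_def, Matrix.vandermonde_apply]

theorem antisymmetrization_vandermonde_identity_general (p : ℕ) :
    (∑ σ : Equiv.Perm (Fin p),
        (Equiv.Perm.sign σ : ℤ) •
          ∏ ℓ : Fin p,
            (MvPolynomial.X (σ ℓ) : MvPolynomial (Fin p) (Polynomial ℤ)) ^ ((ℓ : ℕ) + 1) *
              (MvPolynomial.C Polynomial.X + MvPolynomial.X (σ ℓ)) ^ (ℓ : ℕ)) =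
      (∏ ℓ : Fin p, (MvPolynomial.X ℓ : MvPolynomial (Fin p) (Polynomial ℤ))) *
        ∏ ℓ : Fin p, ∏ m : Fin p,
          if ℓ < m then
            (MvPolynomial.X m - MvPolynomial.X ℓ) *
              (MvPolynomial.C Polynomial.X + MvPolynomial.X ℓ + MvPolynomial.X m)
          else 1 := by
  set τ : MvPolynomial (Fin p) (Polynomial ℤ) := C Polynomial.X
  have h_summand (v : MvPolynomial (Fin p) (Polynomial ℤ)) (k : ℕ) :
      v ^ (k + 1) * (τ + v) ^ k = v * (v * (τ + v)) ^ k := by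
    rw [mul_pow, pow_succ', mul_assoc]
  simp only [h_summand]
  rw [sum_sign_smul_prod_mul_pow_eq (fun m => X m) (fun m => X m * (τ + X m))]
  simp only [← prod_filter, filter_lt_eq_Ioi, mul_add_self_sub_mul_add_self]

/-- The antisymmetrization (Vandermonde-type) identity: in `ℤ[τ][v_1,…,v_p]`,
    `∑_{σ ∈ S_p} sgn(σ) ∏_{ℓ=1}^p v_{σ(ℓ)}^ℓ (τ + v_{σ(ℓ)})^{ℓ-1}
       = ∏_ℓ v_ℓ · ∏_{ℓ<m} (v_m - v_ℓ)(τ + v_ℓ + v_m)`. -/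
theorem antisymmetrization_vandermonde_identity (p : ℕ) (hp : 1 ≤ p) :
    (∑ σ : Equiv.Perm (Fin p),
        (Equiv.Perm.sign σ : ℤ) •
          ∏ ℓ : Fin p,
            (MvPolynomial.X (σ ℓ) : MvPolynomial (Fin p) (Polynomial ℤ)) ^ ((ℓ : ℕ) + 1) *
              (MvPolynomial.C Polynomial.X + MvPolynomial.X (σ ℓ)) ^ (ℓ : ℕ)) =
      (∏ ℓ : Fin p, (MvPolynomial.X ℓ : MvPolynomial (Fin p) (Polynomial ℤ))) *
        ∏ ℓ : Fin p, ∏ m : Fin p,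
          if ℓ < m then
            (MvPolynomial.X m - MvPolynomial.X ℓ) *
              (MvPolynomial.C Polynomial.X + MvPolynomial.X ℓ + MvPolynomial.X m)
          else 1 :=
  antisymmetrization_vandermonde_identity_general p
end

section
/- Let R be a commutative ring, p ≥ 1, and let φ, f_1, …, f_p, g_1, …, g_p be Laurent polynomials in one variable over R. In the ring of Laurent polynomials R[u_1^{±1}, …, u_p^{±1}], the coefficient of the monomial u_1^0⋯u_p^0 (the multivariate constant term) of ∏_{i=1}^{p} φ(u_i) · det_{1≤ℓ,i≤p}( f_ℓ(u_i) ) · det_{1≤m,i≤p}( g_m(u_i) ) equals p! · det_{1≤ℓ,m≤p}( ct(φ·f_ℓ·g_m) ), where ct denotes the constant term (coefficient of u^0) of a one-variable Laurent polynomial over R. -/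
/-!
Expanding both determinants writes the product as a signed sum, over pairs of permutations
`(σ, τ)`, of `∏ᵢ (φ f_{σ i} g_{τ i})(u_i)`. Each such product is a product in separate variables,
so its constant term is `∏ᵢ M (σ i) (τ i)` with `M ℓ m = ct(φ f_ℓ g_m)`. For fixed `τ`, the sum
over `σ` weighted by `sign σ` is the determinant of `M` with columns permuted by `τ`, i.e.
`sign τ * det M`; the extra weight `sign τ` cancels it, and the `p!` choices of `τ` give `p! det M`.
-/

open Finset

/-- The ring homomorphism sending a one-variable Laurent polynomial `h` over `R` to `h(u_i)`
    in the ring of Laurent polynomials `R[u_1^{±1},…,u_p^{±1}]`, realized as the monoid algebra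
    of `Fin p →₀ ℤ` over `R`. -/
noncomputable def atVar {R : Type*} [CommRing R] {p : ℕ} (i : Fin p) :
    LaurentPolynomial R →+* AddMonoidAlgebra R (Fin p →₀ ℤ) :=
  AddMonoidAlgebra.mapDomainRingHom R (Finsupp.singleAddHom i)

section Permutations
open Equiv.Perm
variable {n S : Type*} [Fintype n] [DecidableEq n] [CommRing S]

theorem prod_mul_det_mul_det_eq_sum_perm_sign_smul (c : n → S) (A B : Matrix n n S) :
    (∏ i, c i) * A.det * B.det =
      ∑ σ : Equiv.Perm n, ∑ τ : Equiv.Perm n,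
        (sign σ * sign τ) • ∏ i, c i * A (σ i) i * B (τ i) i := by
  rw [Matrix.det_apply, Matrix.det_apply, mul_sum _ _ (∏ i, c i), sum_mul_sum]
  refine sum_congr rfl fun σ _ => ?_
  refine sum_congr rfl fun τ _ => ?_
  simp only [prod_mul_distrib, Units.smul_def, Units.val_mul, zsmul_eq_mul, Int.cast_mul]
  ring

theorem sum_perm_sum_perm_sign_smul_prod_eq_factorial_mul_det (M : Matrix n n S) :
    ∑ σ : Equiv.Perm n, ∑ τ : Equiv.Perm n, (sign σ * sign τ) • ∏ i, M (σ i) (τ i) =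
      (Fintype.card n).factorial * M.det := by
  have sum_perm_eq_det (τ : Equiv.Perm n) :
      ∑ σ : Equiv.Perm n, (sign σ * sign τ) • ∏ i, M (σ i) (τ i) = M.det := by
    calc _ = sign τ • (M.submatrix id τ).det := by
          rw [Matrix.det_apply, smul_sum]
          simp_rw [mul_comm (sign _) (sign τ), mul_smul]
          rfl
      _ = M.det := by
          rw [Matrix.det_permute', Units.smul_def, zsmul_eq_mul, ← mul_assoc, ← Int.cast_mul,
            ← Units.val_mul, Int.units_mul_self, Units.val_one, Int.cast_one, one_mul]
  rw [sum_comm]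
  simp_rw [sum_perm_eq_det, sum_const, card_univ, Fintype.card_perm, nsmul_eq_mul]

end Permutations

section ConstantTerm
variable {R : Type*} [CommRing R] {p : ℕ}

theorem atVar_eq_sum (i : Fin p) (h : LaurentPolynomial R) :
    atVar i h =
      ∑ k ∈ h.coeff.support, AddMonoidAlgebra.single (Finsupp.single i k) (h.coeff k) := by
  conv_lhs => rw [← AddMonoidAlgebra.sum_coeff_single h]
  simp only [atVar, Finsupp.sum, map_sum, AddMonoidAlgebra.mapDomainRingHom_apply,
    AddMonoidAlgebra.mapDomain_single, Finsupp.singleAddHom_apply]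

theorem coeff_zero_prod_atVar (h : Fin p → LaurentPolynomial R) :
    (∏ i, atVar i (h i)).coeff 0 = ∏ i, (h i).coeff 0 := by
  simp_rw [atVar_eq_sum, prod_univ_sum, AddMonoidAlgebra.prod_single, AddMonoidAlgebra.coeff_sum,
    Finsupp.finsetSum_apply, AddMonoidAlgebra.coeff_single, Finsupp.single_apply,
    ← Finsupp.equivFunOnFinite_symm_eq_sum]
  have hzero : Finsupp.equivFunOnFinite (0 : Fin p →₀ ℤ) = 0 := rfl
  simp_rw [Equiv.symm_apply_eq, hzero, sum_ite_eq']
  split_ifs with hmem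
  · rfl
  obtain ⟨i, hi⟩ := not_forall.mp (Fintype.mem_piFinset.not.mp hmem)
  exact (prod_eq_zero (mem_univ i) (Finsupp.notMem_support_iff.mp hi : (h i).coeff 0 = 0)).symm

end ConstantTerm

theorem andreief_constant_term_general (R : Type*) [CommRing R] (p : ℕ)
    (φ : LaurentPolynomial R) (f g : Fin p → LaurentPolynomial R) :
    ((∏ i : Fin p, atVar i φ) *
          Matrix.det (Matrix.of fun ℓ i : Fin p => atVar i (f ℓ)) *
          Matrix.det (Matrix.of fun m i : Fin p => atVar i (g m))).coeff
        (0 : Fin p →₀ ℤ) =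
      (p.factorial : R) *
        Matrix.det (Matrix.of fun ℓ m : Fin p => (φ * f ℓ * g m).coeff (0 : ℤ)) := by
  have h := sum_perm_sum_perm_sign_smul_prod_eq_factorial_mul_det
    (Matrix.of fun ℓ m : Fin p => (φ * f ℓ * g m).coeff (0 : ℤ))
  rw [Fintype.card_fin] at h
  rw [← h, prod_mul_det_mul_det_eq_sum_perm_sign_smul]
  simp only [AddMonoidAlgebra.coeff_sum, Finsupp.finsetSum_apply,
    AddMonoidAlgebra.coeff_smul_apply, Matrix.of_apply, ← coeff_zero_prod_atVar, map_mul]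

/-- The discrete (constant-term) Andréief/Heine identity: for one-variable Laurent polynomials
    `φ, f_1, …, f_p, g_1, …, g_p` over a commutative ring `R`, the multivariate constant term
    of `∏_i φ(u_i) · det(f_ℓ(u_i)) · det(g_m(u_i))` equals `p! · det(ct(φ f_ℓ g_m))`. -/
theorem andreief_constant_term (R : Type*) [CommRing R] (p : ℕ) (hp : 1 ≤ p)
    (φ : LaurentPolynomial R) (f g : Fin p → LaurentPolynomial R) :
    ((∏ i : Fin p, atVar i φ) *
          Matrix.det (Matrix.of fun ℓ i : Fin p => atVar i (f ℓ)) *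
          Matrix.det (Matrix.of fun m i : Fin p => atVar i (g m))).coeff
        (0 : Fin p →₀ ℤ) =
      (p.factorial : R) *
        Matrix.det (Matrix.of fun ℓ m : Fin p => (φ * f ℓ * g m).coeff (0 : ℤ)) :=
  andreief_constant_term_general R p φ f g
end
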